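/- arXiv:2309.12977 — 4 statements merged into one kernel-verified Lean document; each statement's English description precedes it below -/
import Mathlib

section
/- Let K₁, K₂ ≥ 0 and set γ₁ = K₁K₂/((K₁+1)(K₂+1)) and γ₂ = (K₁+K₂+1)/((K₁+1)(K₂+1)). Let h̄₂ ∈ ℂ^{1×N} and H̄₁ ∈ ℂ^{N×M} be deterministic with every entry of h̄₂ and of H̄₁ having modulus 1, and let Φ be a deterministic N×N diagonal matrix whose diagonal entries all have modulus 1. Let g ∈ ℂ^{1×M}, H̃₁ ∈ ℂ^{N×M}, and h̃₂ ∈ ℂ^{1×N} be random with all of their scalar entries (across all three objects) mutually independent, square-integrable, of zero mean and with E[|·|²] = 1. Define h₂ = √(K₂/(K₂+1))·h̄₂ + √(1/(K₂+1))·h̃₂ and H₁ = √(K₁/(K₁+1))·H̄₁ + √(1/(K₁+1))·H̃₁. Then E[‖h₂ Φ H₁ + g‖²] = γ₁‖h̄₂ Φ H̄₁‖² + γ₂ M N + M. -/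
/-!
Each output entry `(h₂ Φ H₁ + g)_m` is a linear combination of monomials `∏ i ∈ S, X i` in the
independent standardized entries `X i` of `g`, `H̃₁`, `h̃₂`, with pairwise distinct supports `S`:
`∅`, `{g_m}`, `{H̃₁ n m}`, `{h̃₂ n}` and `{h̃₂ n, H̃₁ n m}`. By independence `E[X_S · conj X_T]`
factors into one-variable moments, which vanish as soon as `S ≠ T`; so these monomials are
orthonormal in `L²` and the second moment of the entry is the sum of the squared moduli of the
coefficients. For unit-modulus `h̄₂`, `H̄₁`, `Φ` the constant term contributes
`γ₁ |(h̄₂ Φ H̄₁)_m|²`, `g_m` contributes `1`, and the remaining `3N` terms add up to `γ₂ N`.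
-/

open MeasureTheory ProbabilityTheory Matrix
open scoped ComplexConjugate

section

variable {Ω 𝕜 : Type*} [MeasurableSpace Ω] {μ : Measure Ω} [RCLike 𝕜]

lemma ProbabilityTheory.iIndepFun.integrable_fun_prod_comp {ι : Type*} [Fintype ι]
    {𝓧 : ι → Type*} {m𝓧 : ∀ i, MeasurableSpace (𝓧 i)} {X : ∀ i, Ω → 𝓧 i} {f : ∀ i, 𝓧 i → 𝕜}
    (hX : iIndepFun X μ) (mX : ∀ i, AEMeasurable (X i) μ)
    (hf : ∀ i, AEStronglyMeasurable (f i) (μ.map (X i)))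
    (hfX : ∀ i, Integrable (fun ω ↦ f i (X i ω)) μ) :
    Integrable (fun ω ↦ ∏ i, f i (X i ω)) μ := by
  have := hX.isProbabilityMeasure
  have := fun i ↦ Measure.isProbabilityMeasure_map (mX i)
  have hpi : Integrable (fun x : ∀ i, 𝓧 i ↦ ∏ i, f i (x i)) (μ.map fun ω i ↦ X i ω) := by
    rw [hX.map_fun_eq_pi_map mX]
    exact .fintype_prod_dep fun i ↦ (integrable_map_measure (hf i) (mX i)).2 (hfX i)
  exact (integrable_map_measure hpi.1 (aemeasurable_pi_lambda _ mX)).1 hpi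

lemma prod_mul_conj_prod_eq_prod {ι : Type*} [Fintype ι] [DecidableEq ι] (S T : Finset ι)
    (x : ι → 𝕜) :
    (∏ i ∈ S, x i) * conj (∏ i ∈ T, x i)
      = ∏ i, (if i ∈ S then x i else 1) * (if i ∈ T then conj (x i) else 1) := by
  rw [Finset.prod_mul_distrib, Finset.prod_ite_mem, Finset.prod_ite_mem, map_prod,
    Finset.univ_inter, Finset.univ_inter]

lemma continuous_ite_mul_ite_conj (p q : Prop) [Decidable p] [Decidable q] :
    Continuous fun z : 𝕜 ↦ (if p then z else 1) * (if q then conj z else 1) := by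
  refine .mul ?_ ?_ <;> split_ifs
  exacts [continuous_id, continuous_const, RCLike.continuous_conj, continuous_const]

lemma integral_mul_conj_eq_integral_norm_sq {f : Ω → 𝕜} :
    ∫ ω, f ω * conj (f ω) ∂μ = ((∫ ω, ‖f ω‖ ^ 2 ∂μ : ℝ) : 𝕜) := by
  simp_rw [RCLike.mul_conj]
  exact_mod_cast integral_ofReal (𝕜 := 𝕜)

lemma integral_norm_sq_sum_mul_of_orthonormal {κ : Type*} [Fintype κ] [DecidableEq κ]
    {Z : κ → Ω → 𝕜} (hZ : ∀ k, MemLp (Z k) 2 μ)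
    (horth : ∀ k l, ∫ ω, Z k ω * conj (Z l ω) ∂μ = if k = l then 1 else 0) (c : κ → 𝕜) :
    ∫ ω, ‖∑ k, c k * Z k ω‖ ^ 2 ∂μ = ∑ k, ‖c k‖ ^ 2 := by
  have hint : ∀ k l, Integrable (fun ω ↦ Z k ω * conj (Z l ω)) μ := fun k l ↦
    (hZ k).integrable_mul (p := 2) (q := 2) ((hZ l).star)
  have hexpand : ∀ ω, (∑ k, c k * Z k ω) * conj (∑ k, c k * Z k ω)
      = ∑ k, ∑ l, c k * conj (c l) * (Z k ω * conj (Z l ω)) := fun ω ↦ by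
    simp only [map_sum, map_mul, Finset.sum_mul_sum]
    exact Finset.sum_congr rfl fun k _ ↦ Finset.sum_congr rfl fun l _ ↦ by ring
  suffices h : ((∫ ω, ‖∑ k, c k * Z k ω‖ ^ 2 ∂μ : ℝ) : 𝕜) = ((∑ k, ‖c k‖ ^ 2 : ℝ) : 𝕜) from
    RCLike.ofReal_injective h
  rw [← integral_mul_conj_eq_integral_norm_sq, integral_congr_ae (ae_of_all _ hexpand),
    integral_finsetSum _ fun k _ ↦ integrable_finsetSum _ fun l _ ↦ (hint k l).const_mul _]
  simp_rw [integral_finsetSum _ fun l _ ↦ (hint _ l).const_mul _, integral_const_mul, horth,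
    mul_ite, mul_one, mul_zero, Finset.sum_ite_eq, Finset.mem_univ, if_true, RCLike.mul_conj]
  push_cast
  rfl

structure IsStandardIndepFamily {ι : Type*} (X : ι → Ω → 𝕜) (μ : Measure Ω) : Prop where
  iIndepFun : iIndepFun X μ
  memLp_two : ∀ i, MemLp (X i) 2 μ
  integral_eq_zero : ∀ i, ∫ ω, X i ω ∂μ = 0
  integral_norm_sq : ∀ i, ∫ ω, ‖X i ω‖ ^ 2 ∂μ = 1

namespace IsStandardIndepFamily

variable {ι : Type*} {X : ι → Ω → 𝕜} (hX : IsStandardIndepFamily X μ)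
include hX

lemma memLp_ite_one (i : ι) (p : Prop) [Decidable p] :
    MemLp (fun ω ↦ if p then X i ω else 1) 2 μ := by
  have := hX.iIndepFun.isProbabilityMeasure
  split_ifs
  · exact hX.memLp_two i
  · exact memLp_const 1

lemma integrable_ite_mul_ite_conj (i : ι) (p q : Prop) [Decidable p] [Decidable q] :
    Integrable (fun ω ↦ (if p then X i ω else 1) * (if q then conj (X i ω) else 1)) μ := by
  have hq : MemLp (fun ω ↦ if q then conj (X i ω) else 1) 2 μ := by
    convert (hX.memLp_ite_one i q).star using 2 with ω
    split_ifs <;> simp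
  exact (hX.memLp_ite_one i p).integrable_mul hq

lemma integral_ite_mul_ite_conj (i : ι) (p q : Prop) [Decidable p] [Decidable q] :
    ∫ ω, (if p then X i ω else 1) * (if q then conj (X i ω) else 1) ∂μ
      = if (p ↔ q) then 1 else 0 := by
  have := hX.iIndepFun.isProbabilityMeasure
  by_cases hp : p <;> by_cases hq : q <;> simp only [hp, hq, if_true, if_false, mul_one, one_mul]
  · simp [integral_mul_conj_eq_integral_norm_sq, hX.integral_norm_sq i]
  · simp [hX.integral_eq_zero i]
  · simp [integral_conj, hX.integral_eq_zero i]
  · simp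

variable [Fintype ι] [DecidableEq ι]

lemma integrable_prod_mul_conj_prod (S T : Finset ι) :
    Integrable (fun ω ↦ (∏ i ∈ S, X i ω) * conj (∏ i ∈ T, X i ω)) μ := by
  simp_rw [prod_mul_conj_prod_eq_prod]
  exact hX.iIndepFun.integrable_fun_prod_comp (fun i ↦ (hX.memLp_two i).1.aemeasurable)
    (fun i ↦ (continuous_ite_mul_ite_conj _ _).aestronglyMeasurable)
    (fun i ↦ hX.integrable_ite_mul_ite_conj i _ _)

lemma integral_prod_mul_conj_prod (S T : Finset ι) :
    ∫ ω, (∏ i ∈ S, X i ω) * conj (∏ i ∈ T, X i ω) ∂μ = if S = T then 1 else 0 := by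
  simp_rw [prod_mul_conj_prod_eq_prod]
  rw [hX.iIndepFun.integral_fun_prod_comp (f := fun i z ↦ (if i ∈ S then z else 1) *
    (if i ∈ T then conj z else 1)) (fun i ↦ (hX.memLp_two i).1.aemeasurable)
    (fun i ↦ (continuous_ite_mul_ite_conj _ _).aestronglyMeasurable)]
  simp_rw [hX.integral_ite_mul_ite_conj, Finset.prod_boole, Finset.ext_iff]
  simp

lemma memLp_prod (S : Finset ι) : MemLp (fun ω ↦ ∏ i ∈ S, X i ω) 2 μ := by
  refine (memLp_two_iff_integrable_sq_norm
    (Finset.aestronglyMeasurable_fun_prod S fun i _ ↦ (hX.memLp_two i).1)).2 ?_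
  convert (hX.integrable_prod_mul_conj_prod S S).re using 2 with ω
  rw [RCLike.mul_conj]
  norm_cast

lemma integral_norm_sq_sum_mul_prod {κ : Type*} [Fintype κ] [DecidableEq κ] {S : κ → Finset ι}
    (hS : Function.Injective S) (c : κ → 𝕜) :
    ∫ ω, ‖∑ k, c k * ∏ i ∈ S k, X i ω‖ ^ 2 ∂μ = ∑ k, ‖c k‖ ^ 2 :=
  integral_norm_sq_sum_mul_of_orthonormal (fun k ↦ hX.memLp_prod (S k))
    (fun k l ↦ by simp only [hX.integral_prod_mul_conj_prod, hS.eq_iff]) c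

end IsStandardIndepFamily

section Cascade

variable {N M : ℕ}

def cascadeSupport (m : Fin M) :
    (Unit ⊕ Unit) ⊕ (Fin N ⊕ Fin N ⊕ Fin N) → Finset (Fin M ⊕ ((Fin N × Fin M) ⊕ Fin N)) :=
  Sum.elim (Sum.elim (fun _ ↦ ∅) fun _ ↦ {.inl m})
    (Sum.elim (fun n ↦ {.inr (.inl (n, m))})
      (Sum.elim (fun n ↦ {.inr (.inr n)}) fun n ↦ {.inr (.inr n), .inr (.inl (n, m))}))

lemma cascadeSupport_injective (m : Fin M) : Function.Injective (cascadeSupport (N := N) m) := by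
  rintro ((_ | _) | n | n | n) ((_ | _) | n' | n' | n') h <;>
    simp_all [cascadeSupport, Finset.ext_iff]

def cascadeCoeff (a b e : Fin N → 𝕜) (c₁ d₁ c₂ d₂ : 𝕜) :
    (Unit ⊕ Unit) ⊕ (Fin N ⊕ Fin N ⊕ Fin N) → 𝕜 :=
  Sum.elim (Sum.elim (fun _ ↦ c₁ * c₂ * ∑ n, a n * (b n * e n)) fun _ ↦ 1)
    (Sum.elim (fun n ↦ c₂ * d₁ * a n * b n)
      (Sum.elim (fun n ↦ d₂ * c₁ * b n * e n) fun n ↦ d₂ * d₁ * b n))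

variable (a b e : Fin N → 𝕜) (c₁ d₁ c₂ d₂ : 𝕜) (m : Fin M)

lemma cascade_entry_eq_sum (x : Fin M ⊕ ((Fin N × Fin M) ⊕ Fin N) → 𝕜) :
    ∑ n, (c₂ * a n + d₂ * x (.inr (.inr n))) * (b n * (c₁ * e n + d₁ * x (.inr (.inl (n, m)))))
        + x (.inl m)
      = ∑ k, cascadeCoeff a b e c₁ d₁ c₂ d₂ k * ∏ i ∈ cascadeSupport m k, x i := by
  simp only [cascadeCoeff, Finset.mul_sum, cascadeSupport, Fintype.sum_sum_type, Sum.elim_inl,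
    Finset.univ_unique, Finset.prod_empty, mul_one, Finset.sum_const, Finset.card_singleton,
    one_smul, Sum.elim_inr, Finset.prod_singleton, Finset.mem_singleton, Sum.inr.injEq,
    reduceCtorEq, not_false_eq_true, Finset.prod_insert, ← Finset.sum_add_distrib]
  rw [add_right_comm, ← Finset.sum_add_distrib, one_mul]
  congr 1
  exact Finset.sum_congr rfl fun n _ ↦ by ring

variable {X : Fin M ⊕ ((Fin N × Fin M) ⊕ Fin N) → Ω → 𝕜} (hX : IsStandardIndepFamily X μ)
include hX

lemma IsStandardIndepFamily.memLp_cascade_entry :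
    MemLp (fun ω ↦ ∑ n, (c₂ * a n + d₂ * X (.inr (.inr n)) ω)
      * (b n * (c₁ * e n + d₁ * X (.inr (.inl (n, m))) ω)) + X (.inl m) ω) 2 μ := by
  simp only [fun ω ↦ cascade_entry_eq_sum a b e c₁ d₁ c₂ d₂ m (X · ω)]
  exact memLp_finsetSum _ fun k _ ↦ (hX.memLp_prod _).const_mul _

lemma IsStandardIndepFamily.integral_norm_sq_cascade_entry :
    ∫ ω, ‖∑ n, (c₂ * a n + d₂ * X (.inr (.inr n)) ω)
      * (b n * (c₁ * e n + d₁ * X (.inr (.inl (n, m))) ω)) + X (.inl m) ω‖ ^ 2 ∂μ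
      = ‖c₁ * c₂ * ∑ n, a n * (b n * e n)‖ ^ 2 + 1
        + ∑ n, (‖c₂ * d₁ * a n * b n‖ ^ 2 + ‖d₂ * c₁ * b n * e n‖ ^ 2 + ‖d₂ * d₁ * b n‖ ^ 2) := by
  simp only [fun ω ↦ cascade_entry_eq_sum a b e c₁ d₁ c₂ d₂ m (X · ω)]
  rw [hX.integral_norm_sq_sum_mul_prod (cascadeSupport_injective m)]
  simp [Fintype.sum_sum_type, cascadeCoeff, Finset.sum_add_distrib, add_assoc]

end Cascade

end

lemma norm_sq_ofReal_sqrt {x : ℝ} (hx : 0 ≤ x) : ‖(Real.sqrt x : ℂ)‖ ^ 2 = x := by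
  simp [hx]

theorem lemma1_second_moment_identity_general
    {Ω : Type*} [MeasurableSpace Ω] (μ : Measure Ω)
    {N M : ℕ} (K₁ K₂ : ℝ) (hK₁ : 0 ≤ K₁) (hK₂ : 0 ≤ K₂)
    (hbar₂ : Fin N → ℂ) (Hbar₁ : Matrix (Fin N) (Fin M) ℂ)
    (hhbar₂ : ∀ n, ‖hbar₂ n‖ = 1) (hHbar₁ : ∀ n m, ‖Hbar₁ n m‖ = 1)
    (φd : Fin N → ℂ) (hφd : ∀ n, ‖φd n‖ = 1)
    (g : Ω → Fin M → ℂ) (Ht₁ : Ω → Matrix (Fin N) (Fin M) ℂ) (ht₂ : Ω → Fin N → ℂ)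
    (hIndep : iIndepFun
      (fun (i : Fin M ⊕ ((Fin N × Fin M) ⊕ Fin N)) ω =>
        Sum.elim (fun m => g ω m)
          (Sum.elim (fun p => Ht₁ ω p.1 p.2) (fun n => ht₂ ω n)) i) μ)
    (hg2 : ∀ m, MemLp (fun ω => g ω m) 2 μ)
    (hgMean : ∀ m, ∫ ω, g ω m ∂μ = 0)
    (hgVar : ∀ m, ∫ ω, ‖g ω m‖ ^ 2 ∂μ = 1)
    (hH2 : ∀ n m, MemLp (fun ω => Ht₁ ω n m) 2 μ)
    (hHMean : ∀ n m, ∫ ω, Ht₁ ω n m ∂μ = 0)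
    (hHVar : ∀ n m, ∫ ω, ‖Ht₁ ω n m‖ ^ 2 ∂μ = 1)
    (hh2 : ∀ n, MemLp (fun ω => ht₂ ω n) 2 μ)
    (hhMean : ∀ n, ∫ ω, ht₂ ω n ∂μ = 0)
    (hhVar : ∀ n, ∫ ω, ‖ht₂ ω n‖ ^ 2 ∂μ = 1) :
    ∫ ω, ∑ m, ‖Matrix.vecMul
        (fun n => (Real.sqrt (K₂ / (K₂ + 1)) : ℂ) * hbar₂ n
          + (Real.sqrt (1 / (K₂ + 1)) : ℂ) * ht₂ ω n)
        (Matrix.diagonal φd *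
          ((Real.sqrt (K₁ / (K₁ + 1)) : ℂ) • Hbar₁
            + (Real.sqrt (1 / (K₁ + 1)) : ℂ) • Ht₁ ω)) m + g ω m‖ ^ 2 ∂μ
      = (K₁ * K₂ / ((K₁ + 1) * (K₂ + 1)))
          * ∑ m, ‖Matrix.vecMul hbar₂ (Matrix.diagonal φd * Hbar₁) m‖ ^ 2
        + ((K₁ + K₂ + 1) / ((K₁ + 1) * (K₂ + 1))) * M * N + M := by
  have hX : IsStandardIndepFamily _ μ :=
    ⟨hIndep, by rintro (m | p | n); exacts [hg2 m, hH2 p.1 p.2, hh2 n],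
      by rintro (m | p | n); exacts [hgMean m, hHMean p.1 p.2, hhMean n],
      by rintro (m | p | n); exacts [hgVar m, hHVar p.1 p.2, hhVar n]⟩
  simp only [vecMul, dotProduct, diagonal_mul, Matrix.add_apply, Matrix.smul_apply, smul_eq_mul]
  refine (integral_finsetSum _ fun m _ ↦ (hX.memLp_cascade_entry hbar₂ φd (Hbar₁ · m) _ _ _ _
    m).integrable_norm_pow two_ne_zero).trans ?_
  refine (Finset.sum_congr rfl fun m _ ↦
    hX.integral_norm_sq_cascade_entry hbar₂ φd (Hbar₁ · m) _ _ _ _ m).trans ?_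
  simp only [norm_mul, hhbar₂, hHbar₁, hφd, mul_one, mul_pow, Finset.sum_const, Finset.card_univ,
    Fintype.card_fin, nsmul_eq_mul, Finset.sum_add_distrib]
  rw [← Finset.mul_sum, norm_sq_ofReal_sqrt (by positivity), norm_sq_ofReal_sqrt (by positivity),
    norm_sq_ofReal_sqrt (by positivity), norm_sq_ofReal_sqrt (by positivity)]
  field_simp
  ring

/-- Second-moment identity underlying Lemma 1:
`E[‖h₂ Φ H₁ + g‖²] = γ₁‖h̄₂ Φ H̄₁‖² + γ₂ M N + M`. -/
theorem lemma1_second_moment_identity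
    {Ω : Type*} [MeasurableSpace Ω] (μ : Measure Ω) [IsProbabilityMeasure μ]
    {N M : ℕ} (K₁ K₂ : ℝ) (hK₁ : 0 ≤ K₁) (hK₂ : 0 ≤ K₂)
    (hbar₂ : Fin N → ℂ) (Hbar₁ : Matrix (Fin N) (Fin M) ℂ)
    (hhbar₂ : ∀ n, ‖hbar₂ n‖ = 1) (hHbar₁ : ∀ n m, ‖Hbar₁ n m‖ = 1)
    (φd : Fin N → ℂ) (hφd : ∀ n, ‖φd n‖ = 1)
    (g : Ω → Fin M → ℂ) (Ht₁ : Ω → Matrix (Fin N) (Fin M) ℂ) (ht₂ : Ω → Fin N → ℂ)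
    (hIndep : iIndepFun
      (fun (i : Fin M ⊕ ((Fin N × Fin M) ⊕ Fin N)) ω =>
        Sum.elim (fun m => g ω m)
          (Sum.elim (fun p => Ht₁ ω p.1 p.2) (fun n => ht₂ ω n)) i) μ)
    (hg2 : ∀ m, MemLp (fun ω => g ω m) 2 μ)
    (hgMean : ∀ m, ∫ ω, g ω m ∂μ = 0)
    (hgVar : ∀ m, ∫ ω, ‖g ω m‖ ^ 2 ∂μ = 1)
    (hH2 : ∀ n m, MemLp (fun ω => Ht₁ ω n m) 2 μ)
    (hHMean : ∀ n m, ∫ ω, Ht₁ ω n m ∂μ = 0)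
    (hHVar : ∀ n m, ∫ ω, ‖Ht₁ ω n m‖ ^ 2 ∂μ = 1)
    (hh2 : ∀ n, MemLp (fun ω => ht₂ ω n) 2 μ)
    (hhMean : ∀ n, ∫ ω, ht₂ ω n ∂μ = 0)
    (hhVar : ∀ n, ∫ ω, ‖ht₂ ω n‖ ^ 2 ∂μ = 1) :
    ∫ ω, ∑ m, ‖Matrix.vecMul
        (fun n => (Real.sqrt (K₂ / (K₂ + 1)) : ℂ) * hbar₂ n
          + (Real.sqrt (1 / (K₂ + 1)) : ℂ) * ht₂ ω n)
        (Matrix.diagonal φd *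
          ((Real.sqrt (K₁ / (K₁ + 1)) : ℂ) • Hbar₁
            + (Real.sqrt (1 / (K₁ + 1)) : ℂ) • Ht₁ ω)) m + g ω m‖ ^ 2 ∂μ
      = (K₁ * K₂ / ((K₁ + 1) * (K₂ + 1)))
          * ∑ m, ‖Matrix.vecMul hbar₂ (Matrix.diagonal φd * Hbar₁) m‖ ^ 2
        + ((K₁ + K₂ + 1) / ((K₁ + 1) * (K₂ + 1))) * M * N + M :=
  lemma1_second_moment_identity_general μ K₁ K₂ hK₁ hK₂ hbar₂ Hbar₁ hhbar₂ hHbar₁ φd hφd g Ht₁ ht₂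
    hIndep hg2 hgMean hgVar hH2 hHMean hHVar hh2 hhMean hhVar
end

section
/- Fix natural numbers M, Q_x, Q_y, L_x, L_y ≥ 1, set N_x = Q_x L_x, N_y = Q_y L_y, N = N_x N_y, Q = Q_x Q_y, and fix real angles θ_{d₁}, θ_{a₁}, φ_{a₁}, θ_{d₂}, φ_{d₂} and spacings d₁, d₂, λ > 0. Index the RIS elements by pairs (n_x, n_y) with 0 ≤ n_x < N_x, 0 ≤ n_y < N_y, and define the row vector h̄₂ ∈ ℂ^{1×N} with entry exp(i·2π(d₂/λ)(sin θ_{d₂}·n_x + cos θ_{d₂} sin φ_{d₂}·n_y)) at (n_x,n_y), and the matrix H̄₁ ∈ ℂ^{N×M} with entry exp(−i·2π(d₂/λ)(sin θ_{a₁}·n_x + cos θ_{a₁} sin φ_{a₁}·n_y))·exp(i·2π(d₁/λ) sin θ_{d₁}·m) at ((n_x,n_y), m) for 0 ≤ m < M. For φ : {1,…,Q} → ℝ let Φ(φ) be the diagonal N×N matrix whose entry at element (n_x,n_y) is e^{iφ_q}, where q is the index of the subarray containing (n_x,n_y) (the subarray with ⌊n_x/L_x⌋ = q_x and ⌊n_y/L_y⌋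 = q_y). Set p₁ = π(d₂/λ)(sin θ_{d₂} − sin θ_{a₁}) and p₂ = π(d₂/λ)(sin φ_{d₂} cos θ_{d₂} − sin φ_{a₁} cos θ_{a₁}), and assume sin p₁ ≠ 0 and sin p₂ ≠ 0. Define η = (sin(L_x p₁)·sin(L_y p₂)/(L_x sin p₁ · L_y sin p₂))². Then the supremum over all φ : {1,…,Q} → ℝ of ‖h̄₂ Φ(φ) H̄₁‖² equals η·N²·M, and it is attained at φ_{q,opt} = −(2p₁(x_q−1) + 2p₂(y_q−1) + (L_x−1)p₁ + (L_y−1)p₂), where (x_q, y_q) are the (1-based) coordinates of the first element of subarray q. -/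
/-!
The LoS channel `H̄₁` has rank one, so every entry of `h̄₂ Φ(φ) H̄₁` is the same array gain
`S(φ) = ∑ₙ exp(i(2p₁n₁ + 2p₂n₂ + φ_{q(n)}))` times a unit-modulus steering factor, and the
objective equals `M ‖S(φ)‖²`. Writing each coordinate as `n = L q + l` (subarray index, offset),
`S(φ)` factors as `∑_q exp(i(2p₁Lx q₁ + 2p₂Ly q₂ + φ_q))` times the two Dirichlet kernels
`∑_{l<L} exp(2ipl) = exp(i(L-1)p) sin(Lp) / sin p`. The triangle inequality bounds the first
factor by `Q`, with equality when all its phases agree; `φ_opt` makes them agree with the phase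
`-((Lx-1)p₁ + (Ly-1)p₂)`, which cancels that of the kernels.
-/

open Matrix Complex Finset

namespace Complex

theorem exp_two_mul_mul_I_sub_one (θ : ℂ) :
    exp (2 * θ * I) - 1 = exp (θ * I) * (2 * I * sin θ) := by
  have hinv : exp (θ * I) * exp (-θ * I) = 1 := by rw [← exp_add]; simp
  have hsq : exp (θ * I) * exp (θ * I) = exp (2 * θ * I) := by rw [← exp_add]; ring_nf
  rw [show 2 * I * sin θ = I * (2 * sin θ) by ring, two_sin]
  linear_combination (-hsq) + hinv +
    (exp (θ * I) * exp (θ * I) - exp (θ * I) * exp (-θ * I)) * I_sq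

theorem sum_range_exp_two_mul_mul_I {p : ℂ} (hp : sin p ≠ 0) (L : ℕ) :
    ∑ l ∈ range L, exp (2 * p * l * I) = exp ((L - 1) * p * I) * (sin (L * p) / sin p) := by
  have hz : exp (2 * p * I) - 1 ≠ 0 := by
    rw [exp_two_mul_mul_I_sub_one]
    exact mul_ne_zero (exp_ne_zero _) (mul_ne_zero (mul_ne_zero two_ne_zero I_ne_zero) hp)
  have hpow (l : ℕ) : exp (2 * p * l * I) = exp (2 * p * I) ^ l := by
    rw [← exp_nat_mul]
    ring_nf
  simp only [hpow]
  rw [geom_sum_eq (sub_ne_zero.mp hz), div_eq_iff hz, ← exp_nat_mul, exp_two_mul_mul_I_sub_one,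
    show (L : ℂ) * (2 * p * I) = 2 * (L * p) * I by ring, exp_two_mul_mul_I_sub_one]
  field_simp
  rw [mul_assoc (sin _), ← exp_add]
  ring_nf

theorem sum_range_exp_two_mul_ofReal_mul_I {p : ℝ} (hp : Real.sin p ≠ 0) (L : ℕ) :
    ∑ l ∈ range L, exp (2 * p * l * I) =
      exp (↑((L - 1) * p) * I) * ↑(Real.sin (L * p) / Real.sin p) := by
  rw [sum_range_exp_two_mul_mul_I (by exact_mod_cast hp)]
  push_cast
  rfl

end Complex

theorem Real.sin_nat_mul_div_nat_mul_mul_self (L : ℕ) (p : ℝ) :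
    Real.sin (L * p) / (L * Real.sin p) * L = Real.sin (L * p) / Real.sin p := by
  rcases eq_or_ne (L : ℝ) 0 with hL | hL
  · simp [hL]
  · field_simp

theorem Fin.sum_univ_mul_eq_sum_sum {M : Type*} [AddCommMonoid M] (Q L : ℕ) (f : ℕ → ℕ → M) :
    ∑ n : Fin (Q * L), f n (n / L) = ∑ q : Fin Q, ∑ l : Fin L, f (L * q + l) q := by
  rw [← finProdFinEquiv.sum_comp, Fintype.sum_prod_type]
  refine sum_congr rfl fun q _ => sum_congr rfl fun l _ => ?_
  have hdiv : (l + L * q) / L = q := by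
    rw [Nat.add_mul_div_left _ _ l.pos, Nat.div_eq_of_lt l.isLt, zero_add]
  simp [finProdFinEquiv, hdiv, add_comm]

theorem sum_norm_sq_vecMul_diagonal_mul_vecMulVec {𝕜 ι κ : Type*} [NormedField 𝕜] [Fintype ι]
    [DecidableEq ι] [Fintype κ] (h d a : ι → 𝕜) (b : κ → 𝕜) :
    ∑ m, ‖(h ᵥ* (diagonal d * vecMulVec a b)) m‖ ^ 2 = ‖(h * d) ⬝ᵥ a‖ ^ 2 * ∑ m, ‖b m‖ ^ 2 := by
  have hdiag : h ᵥ* diagonal d = h * d := funext (vecMul_diagonal h d)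
  simp only [← vecMul_vecMul, hdiag, vecMul_vecMulVec, Pi.smul_apply, norm_smul, mul_pow, mul_sum]

-- The common factor of all entries of `h̄₂ Φ(φ) H̄₁`; `n / L` is the subarray index of `n`.
noncomputable def subarrayGain (Qx Lx Qy Ly : ℕ) (p₁ p₂ : ℝ) (φ : ℕ × ℕ → ℝ) : ℂ :=
  ∑ n : Fin (Qx * Lx) × Fin (Qy * Ly),
    exp (↑(2 * p₁ * (n.1 : ℕ) + 2 * p₂ * (n.2 : ℕ) + φ (n.1 / Lx, n.2 / Ly)) * I)

def optimalPhase (Lx Ly : ℕ) (p₁ p₂ : ℝ) (q : ℕ × ℕ) : ℝ :=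
  -(2 * p₁ * (Lx * q.1 : ℕ) + 2 * p₂ * (Ly * q.2 : ℕ) + (Lx - 1) * p₁ + (Ly - 1) * p₂)

section subarrayGain

variable {Qx Lx Qy Ly : ℕ} {p₁ p₂ : ℝ}

theorem subarrayGain_eq (φ : ℕ × ℕ → ℝ) :
    subarrayGain Qx Lx Qy Ly p₁ p₂ φ =
      (∑ q : Fin Qx × Fin Qy,
        exp (↑(2 * p₁ * (Lx * q.1 : ℕ) + 2 * p₂ * (Ly * q.2 : ℕ) + φ (q.1, q.2)) * I)) *
      ((∑ l ∈ range Lx, exp (2 * p₁ * l * I)) * ∑ l ∈ range Ly, exp (2 * p₂ * l * I)) := by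
  have hsplit (n₁ q₁ : ℕ) :
      ∑ n₂ : Fin (Qy * Ly), exp (↑(2 * p₁ * n₁ + 2 * p₂ * (n₂ : ℕ) + φ (q₁, n₂ / Ly)) * I) =
        ∑ q₂ : Fin Qy, ∑ l₂ : Fin Ly,
          exp (↑(2 * p₁ * n₁ + 2 * p₂ * (Ly * q₂ + l₂ : ℕ) + φ (q₁, q₂)) * I) :=
    Fin.sum_univ_mul_eq_sum_sum (f := fun n₂ q₂ =>
      exp (↑(2 * p₁ * n₁ + 2 * p₂ * n₂ + φ (q₁, q₂)) * I)) ..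
  have hfactor (q₁ : Fin Qx) (l₁ : Fin Lx) (q₂ : Fin Qy) (l₂ : Fin Ly) :
      exp (↑(2 * p₁ * (Lx * q₁ + l₁ : ℕ) + 2 * p₂ * (Ly * q₂ + l₂ : ℕ) + φ (q₁, q₂)) * I) =
        exp (↑(2 * p₁ * (Lx * q₁ : ℕ) + 2 * p₂ * (Ly * q₂ : ℕ) + φ (q₁, q₂)) * I) *
          (exp (2 * p₁ * (l₁ : ℕ) * I) * exp (2 * p₂ * (l₂ : ℕ) * I)) := by
    rw [← exp_add, ← exp_add]
    push_cast
    ring_nf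
  rw [subarrayGain, Fintype.sum_prod_type,
    Fin.sum_univ_mul_eq_sum_sum (f := fun n₁ q₁ => ∑ n₂ : Fin (Qy * Ly),
      exp (↑(2 * p₁ * n₁ + 2 * p₂ * (n₂ : ℕ) + φ (q₁, n₂ / Ly)) * I)),
    ← Fin.sum_univ_eq_sum_range, ← Fin.sum_univ_eq_sum_range, sum_mul_sum, sum_mul,
    Fintype.sum_prod_type]
  simp only [hsplit, hfactor, mul_sum]
  exact sum_congr rfl fun q₁ _ => sum_comm

theorem norm_subarrayGain_le (hs₁ : Real.sin p₁ ≠ 0) (hs₂ : Real.sin p₂ ≠ 0) (φ : ℕ × ℕ → ℝ) :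
    ‖subarrayGain Qx Lx Qy Ly p₁ p₂ φ‖ ≤
      Qx * Qy * |Real.sin (Lx * p₁) / Real.sin p₁ * (Real.sin (Ly * p₂) / Real.sin p₂)| := by
  rw [subarrayGain_eq, norm_mul, sum_range_exp_two_mul_ofReal_mul_I hs₁,
    sum_range_exp_two_mul_ofReal_mul_I hs₂]
  simp only [norm_mul, norm_exp_ofReal_mul_I, norm_real, Real.norm_eq_abs, one_mul, abs_mul]
  gcongr
  calc _ ≤ ∑ q : Fin Qx × Fin Qy, (1 : ℝ) :=
        (norm_sum_le _ _).trans_eq (sum_congr rfl fun q _ => norm_exp_ofReal_mul_I _)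
    _ = Qx * Qy := by simp

theorem subarrayGain_optimalPhase (hs₁ : Real.sin p₁ ≠ 0) (hs₂ : Real.sin p₂ ≠ 0) :
    subarrayGain Qx Lx Qy Ly p₁ p₂ (optimalPhase Lx Ly p₁ p₂) =
      ↑(Qx * Qy * (Real.sin (Lx * p₁) / Real.sin p₁ * (Real.sin (Ly * p₂) / Real.sin p₂))) := by
  have hphase (q₁ q₂ : ℕ) : 2 * p₁ * (Lx * q₁ : ℕ) + 2 * p₂ * (Ly * q₂ : ℕ) +
      optimalPhase Lx Ly p₁ p₂ (q₁, q₂) = -((Lx - 1) * p₁ + (Ly - 1) * p₂) := by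
    rw [optimalPhase]
    ring
  have hcancel : exp (↑(-((Lx - 1) * p₁ + (Ly - 1) * p₂)) * I) *
      (exp (↑((Lx - 1) * p₁) * I) * exp (↑((Ly - 1) * p₂) * I)) = 1 := by
    rw [← exp_add, ← exp_add, ← exp_zero]
    push_cast
    ring_nf
  rw [subarrayGain_eq, sum_range_exp_two_mul_ofReal_mul_I hs₁,
    sum_range_exp_two_mul_ofReal_mul_I hs₂]
  simp only [hphase, sum_const, card_univ, Fintype.card_prod, Fintype.card_fin, nsmul_eq_mul]
  push_cast at hcancel ⊢
  linear_combination (Qx * Qy * (sin (Lx * p₁) / sin p₁) * (sin (Ly * p₂) / sin p₂)) * hcancel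

end subarrayGain

theorem theorem1_max_sq_norm_subarray_general
    (M Qx Qy Lx Ly : ℕ)
    (θd₁ θa₁ φa₁ θd₂ φd₂ d₁ d₂ lam : ℝ)
    (p₁ p₂ : ℝ)
    (hp₁ : p₁ = Real.pi * (d₂ / lam) * (Real.sin θd₂ - Real.sin θa₁))
    (hp₂ : p₂ = Real.pi * (d₂ / lam)
        * (Real.sin φd₂ * Real.cos θd₂ - Real.sin φa₁ * Real.cos θa₁))
    (hs₁ : Real.sin p₁ ≠ 0) (hs₂ : Real.sin p₂ ≠ 0)
    (η : ℝ)
    (hη : η = (Real.sin (Lx * p₁) * Real.sin (Ly * p₂)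
        / ((Lx : ℝ) * Real.sin p₁ * ((Ly : ℝ) * Real.sin p₂))) ^ 2)
    (hbar₂ : Fin (Qx * Lx) × Fin (Qy * Ly) → ℂ)
    (hhbar₂ : hbar₂ = fun n =>
      Complex.exp (Complex.I * ((2 * Real.pi * (d₂ / lam)
        * (Real.sin θd₂ * (n.1.val : ℝ)
          + Real.cos θd₂ * Real.sin φd₂ * (n.2.val : ℝ)) : ℝ) : ℂ)))
    (Hbar₁ : Matrix (Fin (Qx * Lx) × Fin (Qy * Ly)) (Fin M) ℂ)
    (hHbar₁ : Hbar₁ = Matrix.of fun n m =>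
      Complex.exp (-(Complex.I * ((2 * Real.pi * (d₂ / lam)
        * (Real.sin θa₁ * (n.1.val : ℝ)
          + Real.cos θa₁ * Real.sin φa₁ * (n.2.val : ℝ)) : ℝ) : ℂ)))
      * Complex.exp (Complex.I
          * ((2 * Real.pi * (d₁ / lam) * Real.sin θd₁ * (m.val : ℝ) : ℝ) : ℂ)))
    (Φ : (ℕ × ℕ → ℝ) → Matrix (Fin (Qx * Lx) × Fin (Qy * Ly))
        (Fin (Qx * Lx) × Fin (Qy * Ly)) ℂ)
    (hΦ : ∀ φ, Φ φ = Matrix.diagonal fun n =>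
      Complex.exp (Complex.I * ((φ (n.1.val / Lx, n.2.val / Ly) : ℝ) : ℂ)))
    (φopt : ℕ × ℕ → ℝ)
    (hφopt : ∀ q : ℕ × ℕ, φopt q =
      -(2 * p₁ * (((q.1 * Lx + 1 : ℕ) : ℝ) - 1) + 2 * p₂ * (((q.2 * Ly + 1 : ℕ) : ℝ) - 1)
        + ((Lx : ℝ) - 1) * p₁ + ((Ly : ℝ) - 1) * p₂)) :
    (∀ φ : ℕ × ℕ → ℝ,
        ∑ m, ‖Matrix.vecMul hbar₂ (Φ φ * Hbar₁) m‖ ^ 2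
          ≤ η * ((Qx * Lx * (Qy * Ly) : ℕ) : ℝ) ^ 2 * M) ∧
    ∑ m, ‖Matrix.vecMul hbar₂ (Φ φopt * Hbar₁) m‖ ^ 2
      = η * ((Qx * Lx * (Qy * Ly) : ℕ) : ℝ) ^ 2 * M := by
  have hrankOne : Hbar₁ = vecMulVec _ _ := hHbar₁
  have hgain (φ : ℕ × ℕ → ℝ) :
      ∑ m, ‖(hbar₂ ᵥ* (Φ φ * Hbar₁)) m‖ ^ 2 = ‖subarrayGain Qx Lx Qy Ly p₁ p₂ φ‖ ^ 2 * M := by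
    rw [hΦ, hrankOne, sum_norm_sq_vecMul_diagonal_mul_vecMulVec]
    congr 2
    · congr 1
      simp only [dotProduct, subarrayGain]
      refine sum_congr rfl fun n _ => ?_
      rw [hhbar₂, Pi.mul_apply, ← exp_add, ← exp_add, hp₁, hp₂]
      congr 1
      push_cast
      ring
    · simp only [mul_comm I, norm_exp_ofReal_mul_I, one_pow, sum_const, card_univ,
        Fintype.card_fin, nsmul_one]
  have hηN : η * ((Qx * Lx * (Qy * Ly) : ℕ) : ℝ) ^ 2 =
      (Qx * Qy * (Real.sin (Lx * p₁) / Real.sin p₁ * (Real.sin (Ly * p₂) / Real.sin p₂))) ^ 2 := by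
    rw [hη, mul_div_mul_comm, ← Real.sin_nat_mul_div_nat_mul_mul_self Lx p₁,
      ← Real.sin_nat_mul_div_nat_mul_mul_self Ly p₂]
    push_cast
    ring
  refine ⟨fun φ => ?_, ?_⟩
  · rw [hgain, hηN]
    refine mul_le_mul_of_nonneg_right (sq_le_sq.mpr ?_) M.cast_nonneg
    rw [abs_norm, abs_mul, abs_mul, Nat.abs_cast, Nat.abs_cast]
    exact norm_subarrayGain_le hs₁ hs₂ φ
  · rw [show φopt = optimalPhase Lx Ly p₁ p₂ from funext fun q => by
      rw [hφopt, optimalPhase]; push_cast; ring]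
    rw [hgain, hηN, subarrayGain_optimalPhase hs₁ hs₂, norm_real, Real.norm_eq_abs, sq_abs]

/-- Theorem 1: with the LoS channels of the subarray-based RIS, the supremum over all
subarray phase configurations `φ` of `‖h̄₂ Φ(φ) H̄₁‖²` equals `η·N²·M`, attained at the
optimal phase design `φ_{q,opt}`. -/
theorem theorem1_max_sq_norm_subarray
    (M Qx Qy Lx Ly : ℕ) (hM : 1 ≤ M)
    (hQx : 1 ≤ Qx) (hQy : 1 ≤ Qy) (hLx : 1 ≤ Lx) (hLy : 1 ≤ Ly)
    (θd₁ θa₁ φa₁ θd₂ φd₂ d₁ d₂ lam : ℝ)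
    (hd₁ : 0 < d₁) (hd₂ : 0 < d₂) (hlam : 0 < lam)
    (p₁ p₂ : ℝ)
    (hp₁ : p₁ = Real.pi * (d₂ / lam) * (Real.sin θd₂ - Real.sin θa₁))
    (hp₂ : p₂ = Real.pi * (d₂ / lam)
        * (Real.sin φd₂ * Real.cos θd₂ - Real.sin φa₁ * Real.cos θa₁))
    (hs₁ : Real.sin p₁ ≠ 0) (hs₂ : Real.sin p₂ ≠ 0)
    (η : ℝ)
    (hη : η = (Real.sin (Lx * p₁) * Real.sin (Ly * p₂)
        / ((Lx : ℝ) * Real.sin p₁ * ((Ly : ℝ) * Real.sin p₂))) ^ 2)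
    (hbar₂ : Fin (Qx * Lx) × Fin (Qy * Ly) → ℂ)
    (hhbar₂ : hbar₂ = fun n =>
      Complex.exp (Complex.I * ((2 * Real.pi * (d₂ / lam)
        * (Real.sin θd₂ * (n.1.val : ℝ)
          + Real.cos θd₂ * Real.sin φd₂ * (n.2.val : ℝ)) : ℝ) : ℂ)))
    (Hbar₁ : Matrix (Fin (Qx * Lx) × Fin (Qy * Ly)) (Fin M) ℂ)
    (hHbar₁ : Hbar₁ = Matrix.of fun n m =>
      Complex.exp (-(Complex.I * ((2 * Real.pi * (d₂ / lam)
        * (Real.sin θa₁ * (n.1.val : ℝ)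
          + Real.cos θa₁ * Real.sin φa₁ * (n.2.val : ℝ)) : ℝ) : ℂ)))
      * Complex.exp (Complex.I
          * ((2 * Real.pi * (d₁ / lam) * Real.sin θd₁ * (m.val : ℝ) : ℝ) : ℂ)))
    (Φ : (ℕ × ℕ → ℝ) → Matrix (Fin (Qx * Lx) × Fin (Qy * Ly))
        (Fin (Qx * Lx) × Fin (Qy * Ly)) ℂ)
    (hΦ : ∀ φ, Φ φ = Matrix.diagonal fun n =>
      Complex.exp (Complex.I * ((φ (n.1.val / Lx, n.2.val / Ly) : ℝ) : ℂ)))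
    (φopt : ℕ × ℕ → ℝ)
    (hφopt : ∀ q : ℕ × ℕ, φopt q =
      -(2 * p₁ * (((q.1 * Lx + 1 : ℕ) : ℝ) - 1) + 2 * p₂ * (((q.2 * Ly + 1 : ℕ) : ℝ) - 1)
        + ((Lx : ℝ) - 1) * p₁ + ((Ly : ℝ) - 1) * p₂)) :
    (∀ φ : ℕ × ℕ → ℝ,
        ∑ m, ‖Matrix.vecMul hbar₂ (Φ φ * Hbar₁) m‖ ^ 2
          ≤ η * ((Qx * Lx * (Qy * Ly) : ℕ) : ℝ) ^ 2 * M) ∧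
    ∑ m, ‖Matrix.vecMul hbar₂ (Φ φopt * Hbar₁) m‖ ^ 2
      = η * ((Qx * Lx * (Qy * Ly) : ℕ) : ℝ) ^ 2 * M :=
  theorem1_max_sq_norm_subarray_general M Qx Qy Lx Ly θd₁ θa₁ φa₁ θd₂ φd₂ d₁ d₂ lam p₁ p₂ hp₁ hp₂
    hs₁ hs₂ η hη hbar₂ hhbar₂ Hbar₁ hHbar₁ Φ hΦ φopt hφopt
end

section
/- Let γ₁ > 0, γ₂ ≥ 0 and η ∈ [0,1). Then the function f(N) = log₂((γ₁ N² + γ₂ N + 1)/(γ₁ η N² + γ₂ N + 1)) is strictly increasing on N ∈ (0, ∞). -/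
/-- The SE gap `ΔC^{ub} = log₂((γ₁N² + γ₂N + 1)/(γ₁ηN² + γ₂N + 1))` is strictly
increasing in the number `N ∈ (0,∞)` of RIS elements when `η ∈ [0,1)`. -/
theorem se_gap_strictMonoOn
    (γ₁ γ₂ η : ℝ) (hγ₁ : 0 < γ₁) (hγ₂ : 0 ≤ γ₂) (hη₀ : 0 ≤ η) (hη₁ : η < 1) :
    StrictMonoOn (fun N : ℝ =>
        Real.logb 2 ((γ₁ * N ^ 2 + γ₂ * N + 1) / (γ₁ * η * N ^ 2 + γ₂ * N + 1)))
      (Set.Ioi 0) := by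
  intro x hx y hy hxy
  simp only [Set.mem_Ioi] at hx hy
  have hdx : 0 < γ₁ * η * x ^ 2 + γ₂ * x + 1 := by positivity
  have hdy : 0 < γ₁ * η * y ^ 2 + γ₂ * y + 1 := by positivity
  have hnx : 0 < γ₁ * x ^ 2 + γ₂ * x + 1 := by positivity
  have hratio : (γ₁ * x ^ 2 + γ₂ * x + 1) / (γ₁ * η * x ^ 2 + γ₂ * x + 1)
      < (γ₁ * y ^ 2 + γ₂ * y + 1) / (γ₁ * η * y ^ 2 + γ₂ * y + 1) := by
    rw [div_lt_div_iff₀ hdx hdy]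
    nlinarith [mul_pos (mul_pos hγ₁ (sub_pos.2 hη₁))
        (mul_pos (sub_pos.2 hxy) (add_pos hx hy)),
      mul_nonneg (mul_nonneg (mul_pos hγ₁ (sub_pos.2 hη₁)).le hγ₂)
        (mul_pos (mul_pos hx hy) (sub_pos.2 hxy)).le]
  exact Real.logb_lt_logb one_lt_two (by positivity) hratio
end

section
/- Let M > 0, N > 0, γ₂ ≥ 0, γ₁ > 0, and η ∈ [0,1]. Then, as P → ∞ (P real, along atTop), the difference log₂(1 + PM(γ₁ N² + γ₂ N + 1)) − log₂(1 + PM(γ₁ η N² + γ₂ N + 1)) tends to log₂((γ₁ N² + γ₂ N + 1)/(γ₁ η N² + γ₂ N + 1)). -/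
open Filter

/-- High-SNR limit of the SE gap: as `P → ∞`,
`log₂(1 + PM(γ₁N² + γ₂N + 1)) − log₂(1 + PM(γ₁ηN² + γ₂N + 1))` tends to
`log₂((γ₁N² + γ₂N + 1)/(γ₁ηN² + γ₂N + 1))`. -/
theorem se_gap_high_snr_limit
    (M N γ₁ γ₂ η : ℝ) (hM : 0 < M) (hN : 0 < N)
    (hγ₂ : 0 ≤ γ₂) (hγ₁ : 0 < γ₁) (hη₀ : 0 ≤ η) (hη₁ : η ≤ 1) :
    Tendsto (fun P : ℝ =>
        Real.logb 2 (1 + P * M * (γ₁ * N ^ 2 + γ₂ * N + 1))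
          - Real.logb 2 (1 + P * M * (γ₁ * η * N ^ 2 + γ₂ * N + 1)))
      atTop
      (nhds (Real.logb 2
        ((γ₁ * N ^ 2 + γ₂ * N + 1) / (γ₁ * η * N ^ 2 + γ₂ * N + 1)))) := by
  set A := γ₁ * N ^ 2 + γ₂ * N + 1 with hA
  set B := γ₁ * η * N ^ 2 + γ₂ * N + 1 with hB
  have hApos : 0 < A := by positivity
  have hBpos : 0 < B := by positivity
  have hMA : (0:ℝ) < M * A := by positivity
  have hMB : (0:ℝ) < M * B := by positivity
  -- the ratio function
  have hratio : Tendsto (fun P : ℝ => (1/P + M * A) / (1/P + M * B)) atTop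
      (nhds ((M * A) / (M * B))) := by
    have h0 : Tendsto (fun P : ℝ => 1/P) atTop (nhds 0) := by
      simpa using tendsto_inv_atTop_zero
    have hnum : Tendsto (fun P : ℝ => 1/P + M * A) atTop (nhds (M * A)) := by
      simpa using h0.add tendsto_const_nhds
    have hden : Tendsto (fun P : ℝ => 1/P + M * B) atTop (nhds (M * B)) := by
      simpa using h0.add tendsto_const_nhds
    exact hnum.div hden hMB.ne'
  have hABeq : (M * A) / (M * B) = A / B := by
    field_simp
  rw [hABeq] at hratio
  have hlog : Tendsto (fun P : ℝ => Real.logb 2 ((1/P + M * A) / (1/P + M * B)))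
      atTop (nhds (Real.logb 2 (A / B))) := by
    have hcont : ContinuousAt (Real.logb 2) (A / B) :=
      Real.continuousAt_logb (by positivity)
    exact hcont.tendsto.comp hratio
  refine hlog.congr' ?_
  filter_upwards [eventually_gt_atTop (0:ℝ)] with P hP
  have h1 : (0:ℝ) < 1 + P * M * A := by positivity
  have h2 : (0:ℝ) < 1 + P * M * B := by positivity
  have key : (1/P + M * A) / (1/P + M * B) = (1 + P * M * A) / (1 + P * M * B) := by
    rw [div_eq_div_iff (by positivity) h2.ne']
    field_simp
  rw [key, Real.logb_div h1.ne' h2.ne']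
end
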